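/- Let A be a genotype matrix and B a haplotype matrix explaining A that satisfies the three gamete property. If i, j are columns with {01,10} ⊆ ind^A(i,j), then for every row g of A with g[i] = g[j] = 2 the two rows h, h' of B explaining g satisfy h[i] ≠ h[j] (g is resolved unequally in i and j). -/

import Mathlib

/-- A pair of haplotypes `h`, `h'` explains a genotype `g`:
entries `0`/`1` are copied, and at `2`-entries the haplotypes differ. -/
def ExplainsRow {m : ℕ} (h h' : Fin m → Bool) (g : Fin m → Fin 3) : Prop :=
  ∀ j : Fin m,
    (g j = 0 → h j = false ∧ h' j = false) ∧
    (g j = 1 → h j = true ∧ h' j = true) ∧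
    (g j = 2 → h j ≠ h' j)

/-- A `2n × m` haplotype matrix, given by its odd rows `B₁` and even rows `B₂`,
explains an `n × m` genotype matrix `A`. -/
def Explains {n m : ℕ} (B₁ B₂ : Fin n → Fin m → Bool) (A : Fin n → Fin m → Fin 3) : Prop :=
  ∀ r : Fin n, ExplainsRow (B₁ r) (B₂ r) (A r)

/-- The induced set `ind^B(i,j)` of a haplotype matrix: all pairs `xy` appearing
in columns `i` and `j` in some row of `B`. -/
def indB {n m : ℕ} (B₁ B₂ : Fin n → Fin m → Bool) (i j : Fin m) : Set (Bool × Bool) :=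
  {p | ∃ r : Fin n, (B₁ r i = p.1 ∧ B₁ r j = p.2) ∨ (B₂ r i = p.1 ∧ B₂ r j = p.2)}

/-- The three gamete property: `{01,10,11}` is never a subset of an induced set. -/
def ThreeGamete {n m : ℕ} (B₁ B₂ : Fin n → Fin m → Bool) : Prop :=
  ∀ i j : Fin m,
    ¬ (({(false, true), (true, false), (true, true)} : Set (Bool × Bool)) ⊆ indB B₁ B₂ i j)

/-- The four gamete property: no induced set equals `{00,01,10,11}`. -/
def FourGamete {n m : ℕ} (B₁ B₂ : Fin n → Fin m → Bool) : Prop :=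
  ∀ i j : Fin m,
    indB B₁ B₂ i j ≠
      ({(false, false), (false, true), (true, false), (true, true)} : Set (Bool × Bool))

/-- A genotype matrix admits a directed perfect phylogeny if some explaining
haplotype matrix satisfies the three gamete property. -/
def AdmitsDirectedPP {n m : ℕ} (A : Fin n → Fin m → Fin 3) : Prop :=
  ∃ B₁ B₂ : Fin n → Fin m → Bool, Explains B₁ B₂ A ∧ ThreeGamete B₁ B₂

/-- A genotype matrix admits a perfect phylogeny if some explaining
haplotype matrix satisfies the four gamete property. -/
def AdmitsPP {n m : ℕ} (A : Fin n → Fin m → Fin 3) : Prop :=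
  ∃ B₁ B₂ : Fin n → Fin m → Bool, Explains B₁ B₂ A ∧ FourGamete B₁ B₂

/-- Encode a haplotype entry as a genotype entry. -/
def boolToFin3 (b : Bool) : Fin 3 := if b then 1 else 0

/-- The induced set `ind^A(i,j)` of a genotype matrix. -/
def indA {n m : ℕ} (A : Fin n → Fin m → Fin 3) (i j : Fin m) : Set (Bool × Bool) :=
  {p | ∃ r : Fin n,
    (A r i = boolToFin3 p.1 ∧ A r j = boolToFin3 p.2) ∨
    (A r i = boolToFin3 p.1 ∧ A r j = 2) ∨
    (A r i = 2 ∧ A r j = boolToFin3 p.2)}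

/-!
Every pair in `ind^A(i,j)` is carried by one of the haplotypes explaining the witnessing row,
so `01` and `10` lie in `ind^B(i,j)`. A row with `2` in both columns that were resolved equally
would be resolved as `00` and `11`, putting `11` into `ind^B(i,j)` as well, against the three
gamete property.
-/

section ExplainsRow

variable {m : ℕ} {h h' : Fin m → Bool} {g : Fin m → Fin 3}

theorem ExplainsRow.eq_of_eq_boolToFin3 (hg : ExplainsRow h h' g) {j : Fin m} {x : Bool}
    (hj : g j = boolToFin3 x) : h j = x ∧ h' j = x := by
  cases x
  · exact (hg j).1 hj
  · exact (hg j).2.1 hj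

theorem ExplainsRow.eq_or_eq_of_eq_two (hg : ExplainsRow h h' g) {j : Fin m}
    (hj : g j = 2) (y : Bool) : h j = y ∨ h' j = y := by
  have hne := (hg j).2.2 hj
  revert hne
  cases h j <;> cases h' j <;> cases y <;> decide

theorem ExplainsRow.true_true_of_eq (hg : ExplainsRow h h' g) {i j : Fin m}
    (hi : g i = 2) (hj : g j = 2) (heq : h i = h j) :
    (h i = true ∧ h j = true) ∨ (h' i = true ∧ h' j = true) := by
  have hne_i := (hg i).2.2 hi
  have hne_j := (hg j).2.2 hj
  revert heq hne_i hne_j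
  cases h i <;> cases h j <;> cases h' i <;> cases h' j <;> decide

end ExplainsRow

theorem indA_subset_indB {n m : ℕ} {A : Fin n → Fin m → Fin 3} {B₁ B₂ : Fin n → Fin m → Bool}
    (hexp : Explains B₁ B₂ A) (i j : Fin m) : indA A i j ⊆ indB B₁ B₂ i j := by
  rintro ⟨x, y⟩ ⟨r, ⟨hx, hy⟩ | ⟨hx, hy⟩ | ⟨hx, hy⟩⟩
  · exact ⟨r, .inl ⟨((hexp r).eq_of_eq_boolToFin3 hx).1, ((hexp r).eq_of_eq_boolToFin3 hy).1⟩⟩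
  · have hx' := (hexp r).eq_of_eq_boolToFin3 hx
    rcases (hexp r).eq_or_eq_of_eq_two hy y with hy' | hy'
    exacts [⟨r, .inl ⟨hx'.1, hy'⟩⟩, ⟨r, .inr ⟨hx'.2, hy'⟩⟩]
  · have hy' := (hexp r).eq_of_eq_boolToFin3 hy
    rcases (hexp r).eq_or_eq_of_eq_two hx x with hx' | hx'
    exacts [⟨r, .inl ⟨hx', hy'.1⟩⟩, ⟨r, .inr ⟨hx', hy'.2⟩⟩]

/-- Let `B` be a haplotype matrix explaining `A` that satisfies the three gamete
property. If `i, j` are columns with `{01,10} ⊆ ind^A(i,j)`, then every row `g` of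
`A` with `g[i] = g[j] = 2` is resolved unequally in `i` and `j` by its explaining
haplotypes. -/
theorem unequal_resolution_of_01_10 {n m : ℕ} (A : Fin n → Fin m → Fin 3)
    (B₁ B₂ : Fin n → Fin m → Bool) (hexp : Explains B₁ B₂ A) (h3 : ThreeGamete B₁ B₂)
    (i j : Fin m)
    (hind : ({(false, true), (true, false)} : Set (Bool × Bool)) ⊆ indA A i j)
    (r : Fin n) (hi : A r i = 2) (hj : A r j = 2) :
    B₁ r i ≠ B₁ r j := by
  intro heq
  obtain ⟨h01, h10⟩ : (false, true) ∈ indB B₁ B₂ i j ∧ (true, false) ∈ indB B₁ B₂ i j := by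
    simpa only [Set.insert_subset_iff, Set.singleton_subset_iff] using
      hind.trans (indA_subset_indB hexp i j)
  have h11 : (true, true) ∈ indB B₁ B₂ i j := by
    rcases (hexp r).true_true_of_eq hi hj heq with h | h
    exacts [⟨r, .inl h⟩, ⟨r, .inr h⟩]
  exact h3 i j (Set.insert_subset h01 (Set.insert_subset h10 (Set.singleton_subset_iff.2 h11)))
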